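/- Let G be a finite simple graph and M a maximum matching of G. If w₁ and w₂ are distinct bad vertices with respect to M, then there is no single edge uv ∈ M such that w₁ is adjacent to both u and v and w₂ is adjacent to both u and v; that is, no two bad vertices share a common matching edge. -/

import Mathlib

open SimpleGraph

/-- A total cover of a simple graph `G`: a pair of a vertex set `SV` and an edge set
`SE ⊆ E(G)` such that every vertex not in `SV` is adjacent to a vertex of `SV` or is an
endpoint of an edge of `SE`, and every edge not in `SE` has an endpoint in `SV` or shares
an endpoint with an edge of `SE`. -/
def IsTotalCover {V : Type*} (G : SimpleGraph V) (SV : Set V) (SE : Set (Sym2 V)) : Prop :=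
  SE ⊆ G.edgeSet ∧
  (∀ v : V, v ∉ SV → (∃ u ∈ SV, G.Adj v u) ∨ (∃ e ∈ SE, v ∈ e)) ∧
  (∀ e ∈ G.edgeSet, e ∉ SE → (∃ v ∈ SV, v ∈ e) ∨ (∃ f ∈ SE, ∃ v : V, v ∈ e ∧ v ∈ f))

/-- A matching of `G`: a set of edges of `G` that are pairwise vertex-disjoint. -/
def IsMatchingSet {V : Type*} (G : SimpleGraph V) (M : Set (Sym2 V)) : Prop :=
  M ⊆ G.edgeSet ∧ ∀ e ∈ M, ∀ f ∈ M, e ≠ f → ∀ v : V, v ∈ e → v ∉ f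

/-- A maximum matching of `G`: a matching of largest cardinality. -/
def IsMaximumMatching {V : Type*} (G : SimpleGraph V) (M : Set (Sym2 V)) : Prop :=
  IsMatchingSet G M ∧ ∀ M' : Set (Sym2 V), IsMatchingSet G M' → M'.ncard ≤ M.ncard

/-- A vertex is covered by a matching `M` if it is an endpoint of some edge of `M`. -/
def CoveredBy {V : Type*} (M : Set (Sym2 V)) (v : V) : Prop :=
  ∃ e ∈ M, v ∈ e

/-- A bad vertex with respect to a matching `M`: a vertex not covered by `M` which is
adjacent to both endpoints of some edge of `M`. -/
def IsBad {V : Type*} (G : SimpleGraph V) (M : Set (Sym2 V)) (w : V) : Prop :=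
  ¬ CoveredBy M w ∧ ∃ u v : V, s(u, v) ∈ M ∧ G.Adj w u ∧ G.Adj w v

/-- An isolated vertex: a vertex of degree 0, i.e. adjacent to no vertex. -/
def IsIsolated {V : Type*} (G : SimpleGraph V) (v : V) : Prop :=
  ∀ u : V, ¬ G.Adj v u

/-- The total graph `T(G)` of `G`: its vertices are the vertices and edges of `G`, with
adjacency given by adjacency/incidence in `G`. -/
def totalGraph {V : Type*} (G : SimpleGraph V) : SimpleGraph (V ⊕ G.edgeSet) where
  Adj x y :=
    match x, y with
    | .inl a, .inl b => G.Adj a b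
    | .inl a, .inr e => a ∈ e.1
    | .inr e, .inl a => a ∈ e.1
    | .inr e, .inr f => e ≠ f ∧ ∃ v : V, v ∈ e.1 ∧ v ∈ f.1
  symm := by
    refine ⟨?_⟩
    rintro (a | e) (b | f) h
    · exact h.symm
    · exact h
    · exact h
    · exact ⟨h.1.symm, by obtain ⟨v, h1, h2⟩ := h.2; exact ⟨v, h2, h1⟩⟩
  loopless := by
    refine ⟨?_⟩
    rintro (a | e) h
    · exact G.loopless.irrefl a h
    · exact h.1 rfl

/-! An unmatched `w₁` adjacent to `u` and an unmatched `w₂ ≠ w₁` adjacent to `v` turn the matching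
edge `uv` into the middle of the augmenting path `w₁ u v w₂`; trading `uv` for `w₁u` and `vw₂`
gives a larger matching. -/

theorem CoveredBy.mono {V : Type*} {M N : Set (Sym2 V)} {x : V} (h : CoveredBy N x) (hNM : N ⊆ M) :
    CoveredBy M x :=
  let ⟨e, he, hx⟩ := h
  ⟨e, hNM he, hx⟩

theorem coveredBy_insert_iff {V : Type*} {M : Set (Sym2 V)} {x y z : V} :
    CoveredBy (insert s(x, y) M) z ↔ z = x ∨ z = y ∨ CoveredBy M z := by
  simp [CoveredBy, or_assoc]

theorem notMem_of_not_coveredBy {V : Type*} {M : Set (Sym2 V)} {x : V} {e : Sym2 V}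
    (hx : ¬ CoveredBy M x) (hxe : x ∈ e) : e ∉ M :=
  fun he => hx ⟨e, he, hxe⟩

theorem ne_of_not_coveredBy_of_mem {V : Type*} {M : Set (Sym2 V)} {x y : V} {e : Sym2 V}
    (hx : ¬ CoveredBy M x) (he : e ∈ M) (hye : y ∈ e) : x ≠ y := by
  rintro rfl
  exact hx ⟨e, he, hye⟩

namespace IsMatchingSet

variable {V : Type*} {G : SimpleGraph V} {M : Set (Sym2 V)}

theorem mono {N : Set (Sym2 V)} (hM : IsMatchingSet G M) (hNM : N ⊆ M) : IsMatchingSet G N :=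
  ⟨hNM.trans hM.1, fun e he f hf hef => hM.2 e (hNM he) f (hNM hf) hef⟩

theorem not_coveredBy_sdiff_singleton (hM : IsMatchingSet G M) {e : Sym2 V} (he : e ∈ M)
    {x : V} (hx : x ∈ e) : ¬ CoveredBy (M \ {e}) x := by
  rintro ⟨f, ⟨hf, hfe⟩, hxf⟩
  exact hM.2 e he f hf (Ne.symm hfe) x hx hxf

theorem insert (hM : IsMatchingSet G M) {x y : V} (hxy : G.Adj x y) (hx : ¬ CoveredBy M x)
    (hy : ¬ CoveredBy M y) : IsMatchingSet G (insert s(x, y) M) := by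
  have hdisj : ∀ f ∈ M, ∀ z, z ∈ s(x, y) → z ∉ f := by
    rintro f hf z hz hzf
    rcases Sym2.mem_iff.1 hz with rfl | rfl
    exacts [hx ⟨f, hf, hzf⟩, hy ⟨f, hf, hzf⟩]
  refine ⟨Set.insert_subset hxy hM.1, ?_⟩
  rintro e (rfl | he) f (rfl | hf) hef z hze hzf
  · exact hef rfl
  · exact hdisj f hf z hze hzf
  · exact hdisj e he z hzf hze
  · exact hM.2 e he f hf hef z hze hzf

theorem exists_ncard_eq_add_one (hM : IsMatchingSet G M) (hfin : M.Finite) {u v a b : V}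
    (huv : s(u, v) ∈ M) (ha : ¬ CoveredBy M a) (hb : ¬ CoveredBy M b) (hab : a ≠ b)
    (hau : G.Adj a u) (hbv : G.Adj b v) :
    ∃ M' : Set (Sym2 V), IsMatchingSet G M' ∧ M'.ncard = M.ncard + 1 := by
  set N := Insert.insert s(v, b) (M \ {s(u, v)}) with hN_def
  have hN : IsMatchingSet G N :=
    (hM.mono Set.sdiff_subset).insert hbv.symm
      (hM.not_coveredBy_sdiff_singleton huv (Sym2.mem_mk_right u v))
      (fun h => hb (h.mono Set.sdiff_subset))
  have hNcard : N.ncard = M.ncard :=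
    Set.ncard_exchange (notMem_of_not_coveredBy hb (Sym2.mem_mk_right v b)) huv
  have hNa : ¬ CoveredBy N a := by
    rw [hN_def, coveredBy_insert_iff]
    rintro (rfl | rfl | h)
    · exact ne_of_not_coveredBy_of_mem ha huv (Sym2.mem_mk_right _ _) rfl
    · exact hab rfl
    · exact ha (h.mono Set.sdiff_subset)
  have hNu : ¬ CoveredBy N u := by
    rw [hN_def, coveredBy_insert_iff]
    rintro (rfl | rfl | h)
    · exact (hM.1 huv).ne rfl
    · exact ne_of_not_coveredBy_of_mem hb huv (Sym2.mem_mk_left _ _) rfl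
    · exact hM.not_coveredBy_sdiff_singleton huv (Sym2.mem_mk_left u v) h
  refine ⟨Insert.insert s(a, u) N, hN.insert hau hNa hNu, ?_⟩
  rw [Set.ncard_insert_of_notMem (notMem_of_not_coveredBy hNa (Sym2.mem_mk_left a u))
    (hfin.sdiff.insert _), hNcard]

end IsMatchingSet

/-- no two distinct bad vertices (with respect to a maximum matching `M`)
share a common matching edge. -/
theorem stmt_7 {V : Type*} [Fintype V] (G : SimpleGraph V)
    (M : Set (Sym2 V)) (hM : IsMaximumMatching G M)
    (w₁ w₂ : V) (hw₁ : IsBad G M w₁) (hw₂ : IsBad G M w₂) (hne : w₁ ≠ w₂) :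
    ¬ ∃ u v : V, s(u, v) ∈ M ∧
      (G.Adj w₁ u ∧ G.Adj w₁ v) ∧ (G.Adj w₂ u ∧ G.Adj w₂ v) := by
  rintro ⟨u, v, huv, ⟨hw₁u, -⟩, ⟨-, hw₂v⟩⟩
  obtain ⟨M', hM', hcard⟩ :=
    hM.1.exists_ncard_eq_add_one (Set.toFinite M) huv hw₁.1 hw₂.1 hne hw₁u hw₂v
  have := hM.2 M' hM'
  omega
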